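/- Let 1 ≤ p < ∞. The extended Mazur map φ : ℓ^p(ℕ,ℝ) → ℓ²(ℕ,ℝ), defined coordinatewise by a ↦ sgn(a)|a|^{p/2}, is a homeomorphism (a continuous bijection with continuous inverse). -/

import Mathlib

/-!
Write `φ_r(t) = sgn(t)|t|^r`. Since `φ_r ∘ φ_s = φ_{sr}`, the Mazur map `ℓ^p → ℓ^q`, which
is `φ_{p/q}` coordinatewise, is inverted by the one with the exponents swapped, and
`|φ_{p/q}(t)|^q = |t|^p` shows that it lands in `ℓ^q`. For continuity let `r = p/q`.
If `r ≤ 1`, then `φ_r` is `r`-Hölder, so `‖φf - φg‖_q ≤ 2‖f - g‖_p^r`. If `r > 1`, the mean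
value bound `|φ_r(a) - φ_r(b)| ≤ r(|a| + |b|)^(r-1)|a - b|`, Hölder's inequality with exponents
`r` and `p/(p - q)`, and Minkowski's inequality give the local Lipschitz bound
`‖φf - φg‖_q ≤ r(‖f‖ + ‖g‖)^(r-1)‖f - g‖_p`.
-/

open scoped ENNReal

noncomputable def signedRpow (r t : ℝ) : ℝ := Real.sign t * |t| ^ r

section signedRpow

variable {r s : ℝ}

theorem signedRpow_neg (r t : ℝ) : signedRpow r (-t) = -signedRpow r t := by
  simp [signedRpow, Real.sign_neg]

theorem signedRpow_of_nonneg (hr : r ≠ 0) {t : ℝ} (ht : 0 ≤ t) : signedRpow r t = t ^ r := by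
  rcases ht.eq_or_lt with rfl | ht
  · simp [signedRpow, Real.zero_rpow hr]
  · simp [signedRpow, Real.sign_of_pos ht, abs_of_pos ht]

theorem signedRpow_of_nonpos (hr : r ≠ 0) {t : ℝ} (ht : t ≤ 0) : signedRpow r t = -(-t) ^ r := by
  rw [← signedRpow_of_nonneg hr (neg_nonneg.2 ht), signedRpow_neg, neg_neg]

theorem signedRpow_one (t : ℝ) : signedRpow 1 t = t := by
  rcases le_total 0 t with ht | ht
  · rw [signedRpow_of_nonneg one_ne_zero ht, Real.rpow_one]
  · rw [signedRpow_of_nonpos one_ne_zero ht, Real.rpow_one, neg_neg]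

theorem abs_signedRpow (hr : r ≠ 0) (t : ℝ) : |signedRpow r t| = |t| ^ r := by
  rcases le_total 0 t with ht | ht
  · rw [signedRpow_of_nonneg hr ht, abs_of_nonneg ht, abs_of_nonneg (Real.rpow_nonneg ht r)]
  · rw [signedRpow_of_nonpos hr ht, abs_neg, abs_of_nonpos ht,
      abs_of_nonneg (Real.rpow_nonneg (neg_nonneg.2 ht) r)]

theorem sign_signedRpow (hr : r ≠ 0) (t : ℝ) : Real.sign (signedRpow r t) = Real.sign t := by
  rcases lt_trichotomy t 0 with ht | rfl | ht
  · rw [signedRpow_of_nonpos hr ht.le, Real.sign_of_neg ht,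
      Real.sign_of_neg (neg_neg_of_pos (Real.rpow_pos_of_pos (neg_pos.2 ht) r))]
  · simp [signedRpow]
  · rw [signedRpow_of_nonneg hr ht.le, Real.sign_of_pos ht,
      Real.sign_of_pos (Real.rpow_pos_of_pos ht r)]

theorem signedRpow_signedRpow (hs : s ≠ 0) (r t : ℝ) :
    signedRpow r (signedRpow s t) = signedRpow (s * r) t := by
  rw [signedRpow, sign_signedRpow hs, abs_signedRpow hs, ← Real.rpow_mul (abs_nonneg t),
    signedRpow]

theorem abs_signedRpow_sub_le_of_forall_nonneg (hr : 0 < r) {G : ℝ → ℝ → ℝ}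
    (hG_comm : ∀ a b, G a b = G b a) (hG_neg : ∀ a b, G (-a) (-b) = G a b)
    (h_same : ∀ a b, 0 ≤ b → b ≤ a → a ^ r - b ^ r ≤ G a b)
    (h_opp : ∀ a b, 0 ≤ a → 0 ≤ b → a ^ r + b ^ r ≤ G a (-b)) (a b : ℝ) :
    |signedRpow r a - signedRpow r b| ≤ G a b := by
  wlog hba : b ≤ a generalizing a b
  · rw [abs_sub_comm, hG_comm]
    exact this b a (le_of_not_ge hba)
  wlog ha : 0 ≤ a generalizing a b
  · have := this (-b) (-a) (neg_le_neg hba) (by linarith)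
    rwa [signedRpow_neg, signedRpow_neg, neg_sub_neg, hG_neg, hG_comm] at this
  rw [signedRpow_of_nonneg hr.ne' ha]
  rcases le_total 0 b with hb | hb
  · rw [signedRpow_of_nonneg hr.ne' hb,
      abs_of_nonneg (sub_nonneg.2 (Real.rpow_le_rpow hb hba hr.le))]
    exact h_same a b hb hba
  · have hb' := neg_nonneg.2 hb
    rw [signedRpow_of_nonpos hr.ne' hb, sub_neg_eq_add, abs_of_nonneg (by positivity)]
    simpa using h_opp a (-b) ha hb'

theorem abs_signedRpow_sub_le_of_le_one (hr : 0 < r) (hr1 : r ≤ 1) (a b : ℝ) :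
    |signedRpow r a - signedRpow r b| ≤ 2 * |a - b| ^ r := by
  refine abs_signedRpow_sub_le_of_forall_nonneg hr (G := fun a b => 2 * |a - b| ^ r)
    (fun a b => by rw [abs_sub_comm])
    (fun a b => by rw [neg_sub_neg, abs_sub_comm]) (fun a b hb hba => ?_)
    (fun a b ha hb => ?_) a b
  · have hab := sub_nonneg.2 hba
    have := Real.rpow_add_le_add_rpow hab hb hr.le hr1
    rw [sub_add_cancel] at this
    rw [abs_of_nonneg hab]
    nlinarith [Real.rpow_nonneg hab r]
  · rw [sub_neg_eq_add, abs_of_nonneg (add_nonneg ha hb), two_mul]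
    gcongr <;> linarith

theorem rpow_sub_rpow_le_mul_rpow_sub_one_mul {a b : ℝ} (hr : 1 ≤ r) (hb : 0 ≤ b) (hba : b ≤ a) :
    a ^ r - b ^ r ≤ r * a ^ (r - 1) * (a - b) := by
  rcases (hb.trans hba).eq_or_lt with rfl | ha
  · obtain rfl : b = 0 := le_antisymm hba hb
    simp
  have bernoulli := one_add_mul_self_le_rpow_one_add (s := b / a - 1)
    (by linarith [div_nonneg hb ha.le]) hr
  rw [add_sub_cancel, Real.div_rpow hb ha.le, le_div_iff₀ (by positivity)] at bernoulli
  have hdiv : a ^ r / a * a = a ^ r := div_mul_cancel₀ _ ha.ne'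
  rw [Real.rpow_sub_one ha.ne']
  linear_combination bernoulli - r * hdiv

theorem abs_signedRpow_sub_le_of_one_le (hr : 1 ≤ r) (a b : ℝ) :
    |signedRpow r a - signedRpow r b| ≤ r * (|a| + |b|) ^ (r - 1) * |a - b| := by
  have hr0 : r - 1 + 1 ≠ 0 := by linarith
  refine abs_signedRpow_sub_le_of_forall_nonneg (by linarith)
    (G := fun a b => r * (|a| + |b|) ^ (r - 1) * |a - b|)
    (fun a b => by rw [add_comm, abs_sub_comm])
    (fun a b => by rw [abs_neg, abs_neg, neg_sub_neg, abs_sub_comm])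
    (fun a b hb hba => ?_) (fun a b ha hb => ?_) a b
  · have ha := hb.trans hba
    rw [abs_of_nonneg ha, abs_of_nonneg hb, abs_of_nonneg (sub_nonneg.2 hba)]
    calc a ^ r - b ^ r ≤ r * a ^ (r - 1) * (a - b) :=
          rpow_sub_rpow_le_mul_rpow_sub_one_mul hr hb hba
      _ ≤ r * (a + b) ^ (r - 1) * (a - b) := by gcongr; linarith
  · rw [abs_neg, abs_of_nonneg ha, abs_of_nonneg hb, sub_neg_eq_add,
      abs_of_nonneg (add_nonneg ha hb)]
    calc a ^ r + b ^ r = a ^ (r - 1) * a + b ^ (r - 1) * b := by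
          rw [← Real.rpow_add_one' ha hr0, ← Real.rpow_add_one' hb hr0, sub_add_cancel]
      _ ≤ (a + b) ^ (r - 1) * a + (a + b) ^ (r - 1) * b := by gcongr <;> linarith
      _ = 1 * (a + b) ^ (r - 1) * (a + b) := by ring
      _ ≤ r * (a + b) ^ (r - 1) * (a + b) := by gcongr

end signedRpow

theorem lp.norm_le_of_forall_rpow_le_of_hasSum {α : Type*} {E : α → Type*}
    [∀ i, NormedAddCommGroup (E i)] {q : ℝ≥0∞} (hq : 0 < q.toReal) {F : lp E q} {c : α → ℝ}
    {S B : ℝ} (hB : 0 ≤ B) (hF : ∀ i, ‖F i‖ ^ q.toReal ≤ c i) (hc : HasSum c S)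
    (hS : S ≤ B ^ q.toReal) : ‖F‖ ≤ B :=
  lp.norm_le_of_tsum_le hq hB ((hasSum_le hF (lp.hasSum_norm hq F).summable.hasSum hc).trans hS)

section lp

variable {α : Type*} {p q : ℝ≥0∞}

theorem memℓp_signedRpow (hp : 0 < p.toReal) (hq : 0 < q.toReal) (f : lp (fun _ : α => ℝ) p) :
    Memℓp (fun i => signedRpow (p.toReal / q.toReal) (f i)) q := by
  refine memℓp_gen ((lp.hasSum_norm hp f).summable.congr fun i => ?_)
  rw [Real.norm_eq_abs, Real.norm_eq_abs, abs_signedRpow (by positivity),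
    ← Real.rpow_mul (abs_nonneg _), div_mul_cancel₀ _ hq.ne']

noncomputable def mazurMap (hp : 0 < p.toReal) (hq : 0 < q.toReal) (f : lp (fun _ : α => ℝ) p) :
    lp (fun _ : α => ℝ) q :=
  ⟨_, memℓp_signedRpow hp hq f⟩

variable (hp : 0 < p.toReal) (hq : 0 < q.toReal)

@[simp]
theorem mazurMap_apply (f : lp (fun _ : α => ℝ) p) (i : α) :
    mazurMap hp hq f i = signedRpow (p.toReal / q.toReal) (f i) :=
  rfl

theorem mazurMap_mazurMap (f : lp (fun _ : α => ℝ) p) : mazurMap hq hp (mazurMap hp hq f) = f := by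
  refine lp.ext (funext fun i => ?_)
  rw [mazurMap_apply, mazurMap_apply, signedRpow_signedRpow (by positivity),
    div_mul_div_cancel₀' hp.ne', div_self hq.ne', signedRpow_one]

theorem norm_mazurMap_sub_le_of_le (hpq : p.toReal ≤ q.toReal) (f g : lp (fun _ : α => ℝ) p) :
    ‖mazurMap hp hq f - mazurMap hp hq g‖ ≤ 2 * ‖f - g‖ ^ (p.toReal / q.toReal) := by
  have hQ := hq.ne'
  have hfg := lp.norm_nonneg' (f - g)
  refine lp.norm_le_of_forall_rpow_le_of_hasSum hq (by positivity)
    (fun i => ?_) ((lp.hasSum_norm hp (f - g)).mul_left (2 ^ q.toReal)) ?_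
  · simp only [lp.coeFn_sub, Pi.sub_apply, mazurMap_apply, Real.norm_eq_abs]
    calc |signedRpow _ (f i) - signedRpow _ (g i)| ^ q.toReal
        ≤ (2 * |f i - g i| ^ (p.toReal / q.toReal)) ^ q.toReal := by
          gcongr
          exact abs_signedRpow_sub_le_of_le_one (by positivity) ((div_le_one hq).2 hpq) _ _
      _ = 2 ^ q.toReal * |f i - g i| ^ p.toReal := by
          rw [Real.mul_rpow zero_le_two (by positivity), ← Real.rpow_mul (abs_nonneg _),
            div_mul_cancel₀ _ hQ]
  · rw [Real.mul_rpow zero_le_two (by positivity), ← Real.rpow_mul hfg, div_mul_cancel₀ _ hQ]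

theorem norm_mazurMap_sub_le_of_lt (hp1 : 1 ≤ p.toReal) (hqp : q.toReal < p.toReal)
    (f g : lp (fun _ : α => ℝ) p) :
    ‖mazurMap hp hq f - mazurMap hp hq g‖ ≤
      p.toReal / q.toReal * (‖f‖ + ‖g‖) ^ (p.toReal / q.toReal - 1) * ‖f - g‖ := by
  set P := p.toReal
  set Q := q.toReal
  have hr : 1 < P / Q := (one_lt_div hq).2 hqp
  have hPQ : P - Q ≠ 0 := (sub_pos.2 hqp).ne'
  have hf := lp.norm_nonneg' f
  have hg := lp.norm_nonneg' g
  have hfg := lp.norm_nonneg' (f - g)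
  have rpow_rpow_div {x a : ℝ} (hx : 0 ≤ x) (ha : a ≠ 0) : (x ^ a) ^ (P / a) = x ^ P := by
    rw [← Real.rpow_mul hx, mul_div_cancel₀ _ ha]
  have expand {y z : ℝ} (hy : 0 ≤ y) (hz : 0 ≤ z) :
      (P / Q * y ^ (P / Q - 1) * z) ^ Q = (P / Q) ^ Q * (z ^ Q * y ^ (P - Q)) := by
    rw [Real.mul_rpow (by positivity) hz, Real.mul_rpow (by positivity) (by positivity),
      ← Real.rpow_mul hy, sub_mul, div_mul_cancel₀ _ hq.ne', one_mul]
    ring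
  obtain ⟨C, hC0, hCle, hCsum⟩ := Real.Lp_add_le_hasSum_of_nonneg hp1
    (fun i => norm_nonneg (f i)) (fun i => norm_nonneg (g i)) hf hg
    (lp.hasSum_norm hp f) (lp.hasSum_norm hp g)
  have hconj : (P / Q).HolderConjugate (P / (P - Q)) :=
    (Real.holderConjugate_iff_eq_conjExponent hr).2 (by field_simp)
  obtain ⟨D, -, hDle, hDsum⟩ := Real.inner_le_Lp_mul_Lq_hasSum_of_nonneg hconj
    (f := fun i => |f i - g i| ^ Q) (g := fun i => (|f i| + |g i|) ^ (P - Q))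
    (A := ‖f - g‖ ^ Q) (B := C ^ (P - Q)) (by positivity) (by positivity)
    (fun i => by positivity) (fun i => by positivity)
    (by
      simp only [rpow_rpow_div (abs_nonneg _) hq.ne', rpow_rpow_div hfg hq.ne']
      simpa [lp.coeFn_sub, Real.norm_eq_abs] using lp.hasSum_norm hp (f - g))
    (by
      convert hCsum using 1
      · ext i
        rw [rpow_rpow_div (by positivity) hPQ, Real.norm_eq_abs, Real.norm_eq_abs]
      · exact rpow_rpow_div hC0 hPQ)
  refine lp.norm_le_of_forall_rpow_le_of_hasSum hq (by positivity) (fun i => ?_)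
    (hDsum.mul_left ((P / Q) ^ Q)) ?_
  · simp only [lp.coeFn_sub, Pi.sub_apply, mazurMap_apply, Real.norm_eq_abs]
    calc |signedRpow (P / Q) (f i) - signedRpow (P / Q) (g i)| ^ Q
        ≤ (P / Q * (|f i| + |g i|) ^ (P / Q - 1) * |f i - g i|) ^ Q := by
          gcongr
          exact abs_signedRpow_sub_le_of_one_le hr.le _ _
      _ = _ := expand (by positivity) (abs_nonneg _)
  · rw [expand (by positivity) hfg]
    gcongr
    exact hDle.trans (by gcongr)

theorem continuous_mazurMap [Fact (1 ≤ p)] [Fact (1 ≤ q)] :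
    Continuous (mazurMap hp hq : lp (fun _ : α => ℝ) p → lp (fun _ : α => ℝ) q) := by
  refine continuous_iff_continuousAt.2 fun g => tendsto_iff_norm_sub_tendsto_zero.2 ?_
  rcases le_or_gt p.toReal q.toReal with hpq | hqp
  · refine squeeze_zero (fun _ => norm_nonneg _)
      (fun f => norm_mazurMap_sub_le_of_le hp hq hpq f g) ?_
    have : Continuous fun f : lp (fun _ : α => ℝ) p => 2 * ‖f - g‖ ^ (p.toReal / q.toReal) := by
      fun_prop (disch := positivity)
    simpa [Real.zero_rpow (div_pos hp hq).ne'] using this.tendsto g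
  · have hp1 : 1 ≤ p.toReal := by
      simpa using ENNReal.toReal_mono (ENNReal.toReal_pos_iff.1 hp).2.ne (Fact.out : 1 ≤ p)
    have hr : 0 ≤ p.toReal / q.toReal - 1 := by rw [sub_nonneg, one_le_div hq]; exact hqp.le
    refine squeeze_zero (fun _ => norm_nonneg _)
      (fun f => norm_mazurMap_sub_le_of_lt hp hq hp1 hqp f g) ?_
    have : Continuous fun f : lp (fun _ : α => ℝ) p =>
        p.toReal / q.toReal * (‖f‖ + ‖g‖) ^ (p.toReal / q.toReal - 1) * ‖f - g‖ := by
      fun_prop (disch := exact hr)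
    simpa using this.tendsto g

noncomputable def mazurHomeomorph [Fact (1 ≤ p)] [Fact (1 ≤ q)] :
    lp (fun _ : α => ℝ) p ≃ₜ lp (fun _ : α => ℝ) q where
  toFun := mazurMap hp hq
  invFun := mazurMap hq hp
  left_inv := mazurMap_mazurMap hp hq
  right_inv := mazurMap_mazurMap hq hp
  continuous_toFun := continuous_mazurMap hp hq
  continuous_invFun := continuous_mazurMap hq hp

end lp

/-- The extended Mazur map `φ(a)_n = sgn(a_n)|a_n|^{p/2}` is a
homeomorphism from `ℓ^p(ℕ,ℝ)` onto `ℓ²(ℕ,ℝ)`. -/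
theorem extended_mazur_map_homeomorphism (p : ℝ≥0∞) [Fact (1 ≤ p)] (hp : p ≠ ∞) :
    ∃ φ : lp (fun _ : ℕ => ℝ) p ≃ₜ lp (fun _ : ℕ => ℝ) 2,
      ∀ (x : lp (fun _ : ℕ => ℝ) p) (n : ℕ),
        (φ x) n = Real.sign (x n) * |x n| ^ (p.toReal / 2) := by
  have hp0 : 0 < p.toReal := ENNReal.toReal_pos (zero_lt_one.trans_le Fact.out).ne' hp
  refine ⟨mazurHomeomorph hp0 (by norm_num), fun x n => ?_⟩
  simp [mazurHomeomorph, signedRpow]
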